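/- For r ≥ 3, the set X of all vertices on level 0 together with all vertices on level r of the butterfly network BF(r) is a fault-tolerant resolving set of BF(r), and consequently β'(BF(r)) = 2^{r+1}. -/

import Mathlib

open SimpleGraph

variable {V : Type*}

/-- `S` is a resolving set of `G`. -/
def ResSet (G : SimpleGraph V) (S : Set V) : Prop :=
  ∀ x y : V, x ≠ y → ∃ w ∈ S, G.dist x w ≠ G.dist y w

/-- `S` is a fault-tolerant resolving set of `G`. -/
def FTResSet (G : SimpleGraph V) (S : Set V) : Prop :=
  ResSet G S ∧ ∀ x ∈ S, ResSet G (S \ {x})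

/-- Metric dimension. -/
noncomputable def md (G : SimpleGraph V) : ℕ :=
  sInf {n | ∃ S : Set V, S.ncard = n ∧ ResSet G S}

/-- Fault-tolerant metric dimension. -/
noncomputable def ftmd (G : SimpleGraph V) : ℕ :=
  sInf {n | ∃ S : Set V, S.ncard = n ∧ FTResSet G S}

/-- `u` and `v` are twins: distinct and with equal open or equal closed neighborhoods. -/
def IsTwinPair (G : SimpleGraph V) (u v : V) : Prop :=
  u ≠ v ∧ (G.neighborSet u = G.neighborSet v ∨
    G.neighborSet u ∪ {u} = G.neighborSet v ∪ {v})

/-- `u` is a twin vertex. -/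
def IsTwin (G : SimpleGraph V) (u : V) : Prop := ∃ v, IsTwinPair G u v

/-- Adjacency in the butterfly network: levels differ by one, and the binary strings are
equal or differ exactly in bit `max(j,j')` (bits indexed 1..r, so bit `b` is index `b-1`). -/
def BFAdj (r : ℕ) (u v : (Fin r → Bool) × Fin (r + 1)) : Prop :=
  (u.2.val + 1 = v.2.val ∨ v.2.val + 1 = u.2.val) ∧
  (u.1 = v.1 ∨ ∃ k : Fin r, k.val + 1 = max u.2.val v.2.val ∧
      u.1 k ≠ v.1 k ∧ ∀ i : Fin r, i ≠ k → u.1 i = v.1 i)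

/-- The `r`-dimensional butterfly network `BF(r)`. -/
def BF (r : ℕ) : SimpleGraph ((Fin r → Bool) × Fin (r + 1)) where
  Adj u v := BFAdj r u v
  symm := by
    constructor
    rintro u v ⟨h1, h2⟩
    refine ⟨h1.symm, ?_⟩
    rcases h2 with h | ⟨k, hk, hne, hall⟩
    · exact Or.inl h.symm
    · exact Or.inr ⟨k, by omega, hne.symm, fun i hi => (hall i hi).symm⟩
  loopless := by
    constructor
    rintro u ⟨h1 | h1, -⟩ <;> omega

/-!
The distance from `(x, i)` to the level-0 vertex `(w, 0)` is `2 max(i, T) - i`, where `T` is the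
highest bit in which `x` and `w` differ: a shortest path must climb to level `T`, the only place
where that bit can be corrected, and then come back down. The level-reversing automorphism gives
the analogous formula for distances to level `r`. With these formulas, any two distinct vertices
are distinguished by two distinct vertices of levels `0` and `r`, so those two levels form a
fault-tolerant resolving set.

Conversely, twins `u`, `v` (equal neighbourhoods) are at the same distance from every other
vertex, so a fault-tolerant resolving set must contain both of them. Every vertex of level `0`
(resp. `r`) has a twin: flip its bit `1` (resp. `r`), the only bit its edges can change.
-/

namespace SimpleGraph

variable {W : Type*} {G : SimpleGraph V} {H : SimpleGraph W}

theorem Walk.le_add_length_of_adj_le {f : V → ℕ} (hf : ∀ u v, G.Adj u v → f u ≤ f v + 1)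
    {u v : V} (p : G.Walk u v) : f u ≤ f v + p.length := by
  induction p with
  | nil => simp
  | cons h _ ih => have := hf _ _ h; rw [Walk.length_cons]; omega

theorem exists_walk_length_eq_of_descent {f : V → ℕ} {v₀ : V}
    (hf : ∀ u, f u ≠ 0 → ∃ v, G.Adj u v ∧ f u = f v + 1)
    (hzero : ∀ u, f u = 0 → u = v₀)
    (u : V) : ∃ p : G.Walk u v₀, p.length = f u := by
  induction hn : f u generalizing u with
  | zero => obtain rfl := hzero u hn; exact ⟨Walk.nil, rfl⟩
  | succ n ih =>
    obtain ⟨v, huv, hv⟩ := hf u (by omega)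
    obtain ⟨p, hp⟩ := ih v (by omega)
    exact ⟨p.cons huv, by rw [Walk.length_cons, hp]⟩

theorem dist_eq_of_potential {f : V → ℕ} {v₀ : V}
    (hadj : ∀ u v, G.Adj u v → f u ≤ f v + 1)
    (hdescent : ∀ u, f u ≠ 0 → ∃ v, G.Adj u v ∧ f u = f v + 1)
    (hzero : ∀ u, f u = 0 ↔ u = v₀) (u : V) : G.dist u v₀ = f u := by
  obtain ⟨p, hp⟩ := exists_walk_length_eq_of_descent hdescent (fun u => (hzero u).1) u
  obtain ⟨q, hq⟩ := Reachable.exists_walk_length_eq_dist ⟨p⟩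
  have := q.le_add_length_of_adj_le hadj
  rw [(hzero v₀).2 rfl] at this
  exact le_antisymm (hp ▸ dist_le p) (by omega)

theorem Iso.dist_le (φ : G ≃g H) (u v : V) : H.dist (φ u) (φ v) ≤ G.dist u v := by
  by_cases h : G.Reachable u v
  · obtain ⟨p, hp⟩ := h.exists_walk_length_eq_dist
    exact (SimpleGraph.dist_le (p.map φ.toHom)).trans (by rw [Walk.length_map, hp])
  · rw [dist_eq_zero_of_not_reachable h, dist_eq_zero_of_not_reachable]
    exact fun h' => h (by simpa using h'.map φ.symm.toHom)

theorem Iso.dist_eq (φ : G ≃g H) (u v : V) : H.dist (φ u) (φ v) = G.dist u v :=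
  (φ.dist_le u v).antisymm (by simpa using φ.symm.dist_le (φ u) (φ v))

theorem dist_le_of_neighborSet_subset (hG : G.Preconnected) {u v w : V}
    (h : G.neighborSet v ⊆ insert u (G.neighborSet u)) (hw : w ≠ v) :
    G.dist u w ≤ G.dist v w := by
  obtain ⟨p, hp⟩ := (hG v w).exists_walk_length_eq_dist
  cases p with
  | nil => exact absurd rfl hw
  | cons hvb q =>
    rw [← hp, Walk.length_cons]
    rcases h hvb with rfl | hub
    · exact (dist_le q).trans (Nat.le_succ _)
    · exact dist_le (q.cons hub)

end SimpleGraph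

open SimpleGraph

section Twins

variable {G : SimpleGraph V}

theorem IsTwinPair.symm {u v : V} (h : IsTwinPair G u v) : IsTwinPair G v u :=
  ⟨h.1.symm, h.2.imp Eq.symm Eq.symm⟩

theorem IsTwinPair.neighborSet_subset {u v : V} (h : IsTwinPair G u v) :
    G.neighborSet v ⊆ insert u (G.neighborSet u) := by
  rcases h.2 with h | h
  · exact h ▸ Set.subset_insert _ _
  · rw [Set.insert_eq, Set.union_comm, h]
    exact Set.subset_union_left

theorem IsTwinPair.dist_eq (hG : G.Preconnected) {u v w : V} (h : IsTwinPair G u v)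
    (hu : w ≠ u) (hv : w ≠ v) : G.dist u w = G.dist v w :=
  (dist_le_of_neighborSet_subset hG h.neighborSet_subset hv).antisymm
    (dist_le_of_neighborSet_subset hG h.symm.neighborSet_subset hu)

theorem FTResSet.mem_of_isTwinPair (hG : G.Preconnected) {S : Set V} (hS : FTResSet G S)
    {u v : V} (h : IsTwinPair G u v) : u ∈ S := by
  obtain ⟨w, hwS, hwv, hw⟩ : ∃ w ∈ S, w ≠ v ∧ G.dist u w ≠ G.dist v w := by
    by_cases hv : v ∈ S
    · obtain ⟨w, ⟨hwS, hwv⟩, hw⟩ := hS.2 v hv u v h.1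
      exact ⟨w, hwS, hwv, hw⟩
    · obtain ⟨w, hwS, hw⟩ := hS.1 u v h.1
      exact ⟨w, hwS, fun hwv => hv (hwv ▸ hwS), hw⟩
  by_contra hu
  exact hw (h.dist_eq hG (fun hwu => hu (hwu ▸ hwS)) hwv)

theorem ftResSet_of_forall_exists_pair {S : Set V}
    (h : ∀ x y, x ≠ y → ∃ a ∈ S, ∃ b ∈ S, a ≠ b ∧
      G.dist x a ≠ G.dist y a ∧ G.dist x b ≠ G.dist y b) :
    FTResSet G S := by
  refine ⟨fun x y hxy => ?_, fun z _ x y hxy => ?_⟩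
  · obtain ⟨a, ha, -, -, -, hxa, -⟩ := h x y hxy
    exact ⟨a, ha, hxa⟩
  · obtain ⟨a, ha, b, hb, hab, hxa, hxb⟩ := h x y hxy
    by_cases haz : a = z
    · exact ⟨b, ⟨hb, fun hbz => hab (haz.trans hbz.symm)⟩, hxb⟩
    · exact ⟨a, ⟨ha, haz⟩, hxa⟩

theorem ftmd_eq_ncard [Finite V] (hG : G.Preconnected) {X : Set V} (hX : FTResSet G X)
    (htwin : ∀ x ∈ X, IsTwin G x) : ftmd G = X.ncard := by
  refine le_antisymm (Nat.sInf_le ⟨X, rfl, hX⟩) (le_csInf ⟨_, X, rfl, hX⟩ ?_)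
  rintro n ⟨S, rfl, hS⟩
  refine Set.ncard_le_ncard (fun x hx => ?_) (Set.toFinite S)
  obtain ⟨v, hv⟩ := htwin x hx
  exact hS.mem_of_isTwinPair hG hv

end Twins

namespace BF

variable {r : ℕ}

theorem adj_iff {u v : (Fin r → Bool) × Fin (r + 1)} :
    (BF r).Adj u v ↔ (u.2.val + 1 = v.2.val ∨ v.2.val + 1 = u.2.val) ∧
      ∀ k : Fin r, k.val + 1 ≠ max u.2.val v.2.val → u.1 k = v.1 k := by
  refine ⟨fun ⟨hl, hb⟩ => ⟨hl, fun k hk => ?_⟩, fun ⟨hl, hb⟩ => ⟨hl, ?_⟩⟩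
  · rcases hb with h | ⟨k₀, hk₀, -, h⟩
    · rw [h]
    · exact h k (by rintro rfl; exact hk hk₀)
  · by_cases h : u.1 = v.1
    · exact Or.inl h
    · obtain ⟨k₀, hk₀⟩ := Function.ne_iff.1 h
      have hmax : k₀.val + 1 = max u.2.val v.2.val := by_contra fun hc => hk₀ (hb k₀ hc)
      exact Or.inr ⟨k₀, hmax, hk₀, fun k hk => hb k fun hc => hk (Fin.ext (by omega))⟩

theorem adj_update (x : Fin r → Bool) (k : Fin r) (b : Bool) :
    (BF r).Adj (x, k.castSucc) (Function.update x k b, k.succ) := by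
  refine adj_iff.2 ⟨Or.inl rfl, fun j hj => (Function.update_of_ne ?_ _ _).symm⟩
  rintro rfl
  simp at hj

/-- `topDiff w x` is the largest bit, numbered from `1` as in the paper, where `w` and `x`
differ, or `0` if `w = x`. -/
def topDiff (w x : Fin r → Bool) : ℕ :=
  (Finset.univ.filter fun k => w k ≠ x k).sup fun k => k.val + 1

theorem topDiff_le_iff {w x : Fin r → Bool} {n : ℕ} :
    topDiff w x ≤ n ↔ ∀ k : Fin r, n ≤ k.val → w k = x k := by
  simp only [topDiff, Finset.sup_le_iff, Finset.mem_filter, Finset.mem_univ, true_and]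
  refine forall_congr' fun k => ⟨fun h hn => ?_, fun h hne => ?_⟩
  · by_contra hne
    have := h hne
    omega
  · by_contra hlt
    exact hne (h (by omega))

theorem lt_topDiff {w x : Fin r → Bool} {k : Fin r} (h : w k ≠ x k) : k.val < topDiff w x :=
  Nat.lt_of_not_le fun hle => h (topDiff_le_iff.1 hle k le_rfl)

theorem topDiff_le (w x : Fin r → Bool) : topDiff w x ≤ r :=
  topDiff_le_iff.2 fun k hk => absurd k.isLt (by omega)

theorem topDiff_eq_zero_iff {w x : Fin r → Bool} : topDiff w x = 0 ↔ w = x := by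
  rw [← Nat.le_zero, topDiff_le_iff, funext_iff]
  simp

@[simp]
theorem topDiff_self (w : Fin r → Bool) : topDiff w w = 0 :=
  topDiff_eq_zero_iff.2 rfl

theorem topDiff_comm (w x : Fin r → Bool) : topDiff w x = topDiff x w := by
  simp only [topDiff, ne_comm]

theorem topDiff_le_max_of_adj {u v : (Fin r → Bool) × Fin (r + 1)} (h : (BF r).Adj u v)
    (w : Fin r → Bool) : topDiff w u.1 ≤ max (topDiff w v.1) (max u.2.val v.2.val) := by
  refine topDiff_le_iff.2 fun k hk => ?_
  rw [topDiff_le_iff.1 (le_of_max_le_left hk) k le_rfl]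
  exact ((adj_iff.1 h).2 k (by omega)).symm

theorem topDiff_update_le {w x : Fin r → Bool} {k : Fin r} (h : topDiff w x ≤ k.val + 1) :
    topDiff w (Function.update x k (w k)) ≤ k.val := by
  refine topDiff_le_iff.2 fun j hj => ?_
  rcases eq_or_ne j k with rfl | hjk
  · simp
  · rw [Function.update_of_ne hjk]
    exact topDiff_le_iff.1 h j (by have := Fin.val_ne_of_ne hjk; omega)

def levelZeroDist (w : Fin r → Bool) (v : (Fin r → Bool) × Fin (r + 1)) : ℕ :=
  2 * max v.2.val (topDiff w v.1) - v.2.val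

theorem levelZeroDist_le_of_adj (w : Fin r → Bool) {u v : (Fin r → Bool) × Fin (r + 1)}
    (h : (BF r).Adj u v) : levelZeroDist w u ≤ levelZeroDist w v + 1 := by
  have huv := topDiff_le_max_of_adj h w
  have hvu := topDiff_le_max_of_adj h.symm w
  have hl := (adj_iff.1 h).1
  simp only [levelZeroDist]
  omega

theorem exists_adj_levelZeroDist_eq (w : Fin r → Bool) {u : (Fin r → Bool) × Fin (r + 1)}
    (hu : levelZeroDist w u ≠ 0) :
    ∃ v, (BF r).Adj u v ∧ levelZeroDist w u = levelZeroDist w v + 1 := by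
  obtain ⟨x, i⟩ := u
  simp only [levelZeroDist] at hu ⊢
  by_cases hT : topDiff w x ≤ i.val
  · obtain ⟨k, rfl⟩ := Fin.exists_succ_eq.2 (show i ≠ 0 from fun h => by subst h; simp_all)
    refine ⟨(Function.update x k (w k), k.castSucc), ?_, ?_⟩
    · simpa [Function.update_idem, Function.update_eq_self] using
        (adj_update (Function.update x k (w k)) k (x k)).symm
    · have := topDiff_update_le (x := x) (k := k) (by simpa using hT)
      simp only [Fin.val_succ, Fin.val_castSucc] at hT ⊢
      omega
  · have hi : i ≠ Fin.last r := fun h => by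
      have := topDiff_le w x
      rw [h, Fin.val_last] at hT
      omega
    obtain ⟨k, rfl⟩ := Fin.exists_castSucc_eq.2 hi
    refine ⟨(x, k.succ), by simpa using adj_update x k (x k), ?_⟩
    simp only [Fin.val_succ, Fin.val_castSucc] at hT ⊢
    omega

theorem levelZeroDist_eq_zero_iff (w : Fin r → Bool) (u : (Fin r → Bool) × Fin (r + 1)) :
    levelZeroDist w u = 0 ↔ u = (w, 0) := by
  obtain ⟨x, i⟩ := u
  rw [levelZeroDist, Prod.ext_iff, Fin.ext_iff, eq_comm (a := x), ← topDiff_eq_zero_iff]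
  simp only [Fin.val_zero]
  omega

theorem dist_mk_zero (w : Fin r → Bool) (u : (Fin r → Bool) × Fin (r + 1)) :
    (BF r).dist u (w, 0) = levelZeroDist w u :=
  dist_eq_of_potential (fun _ _ => levelZeroDist_le_of_adj w)
    (fun _ => exists_adj_levelZeroDist_eq w)
    (levelZeroDist_eq_zero_iff w) u

theorem preconnected : (BF r).Preconnected := by
  have reach (w : Fin r → Bool) (u) : (BF r).Reachable u (w, 0) :=
    let ⟨p, _⟩ := exists_walk_length_eq_of_descent (fun _ => exists_adj_levelZeroDist_eq w)
      (fun u => (levelZeroDist_eq_zero_iff w u).1) u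
    ⟨p⟩
  exact fun u v => (reach v.1 u).trans (reach v.1 v).symm

def reverse (v : (Fin r → Bool) × Fin (r + 1)) : (Fin r → Bool) × Fin (r + 1) :=
  (v.1 ∘ Fin.rev, v.2.rev)

theorem reverse_involutive : Function.Involutive (reverse (r := r)) := fun v => by
  simp [reverse, Function.comp_def]

theorem adj_reverse {u v : (Fin r → Bool) × Fin (r + 1)} (h : (BF r).Adj u v) :
    (BF r).Adj (reverse u) (reverse v) := by
  obtain ⟨hl, hb⟩ := adj_iff.1 h
  have hu := u.2.isLt
  have hv := v.2.isLt
  refine adj_iff.2 ⟨?_, fun k hk => hb k.rev ?_⟩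
  · simp only [reverse, Fin.val_rev]
    omega
  · simp only [reverse, Fin.val_rev] at hk ⊢
    omega

def reverseIso : BF r ≃g BF r where
  toEquiv := reverse_involutive.toPerm
  map_rel_iff' := ⟨fun h => by simpa [reverse_involutive _] using adj_reverse h, adj_reverse⟩

theorem dist_mk_last (w : Fin r → Bool) (u : (Fin r → Bool) × Fin (r + 1)) :
    (BF r).dist u (w, Fin.last r) = levelZeroDist (w ∘ Fin.rev) (reverse u) := by
  rw [← dist_mk_zero, ← reverseIso.dist_eq]
  simp [reverseIso, reverse]

def endLevels (r : ℕ) : Set ((Fin r → Bool) × Fin (r + 1)) :=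
  {v | v.2.val = 0 ∨ v.2.val = r}

theorem exists_pair_resolving_of_lt (s t : Fin r → Bool) {j l : Fin (r + 1)} (hjl : j < l) :
    ∃ a ∈ endLevels r, ∃ b ∈ endLevels r, a ≠ b ∧
      (BF r).dist (s, j) a ≠ (BF r).dist (t, l) a ∧
      (BF r).dist (s, j) b ≠ (BF r).dist (t, l) b := by
  have hl : l.val ≤ r := l.is_le
  have hjl' : j.val < l.val := hjl
  rcases Nat.eq_zero_or_pos j.val with hj | hj
  · refine ⟨(s, 0), Or.inl rfl, (t, Fin.last r), Or.inr rfl, ?_, ?_, ?_⟩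
    · simp only [ne_eq, Prod.mk.injEq, Fin.ext_iff, Fin.val_zero, Fin.val_last]
      omega
    · simp only [dist_mk_zero, levelZeroDist, topDiff_self]
      omega
    · simp only [dist_mk_last, levelZeroDist, reverse, Fin.val_rev, topDiff_self]
      omega
  · have hr : 0 < r := by omega
    set k : Fin r := ⟨0, hr⟩
    have hflip : topDiff (Function.update s k (!s k)) s ≤ 1 := topDiff_le_iff.2 fun i hi =>
      Function.update_of_ne (Fin.ne_of_val_ne (by simp [k]; omega)) _ _
    refine ⟨(s, 0), Or.inl rfl, (Function.update s k (!s k), 0), Or.inl rfl, by simp,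
      ?_, ?_⟩ <;>
      simp only [dist_mk_zero, levelZeroDist, topDiff_self] <;> omega

theorem exists_pair_resolving_of_ne {s t : Fin r → Bool} (hst : s ≠ t) (j : Fin (r + 1)) :
    ∃ a ∈ endLevels r, ∃ b ∈ endLevels r, a ≠ b ∧
      (BF r).dist (s, j) a ≠ (BF r).dist (t, j) a ∧
      (BF r).dist (s, j) b ≠ (BF r).dist (t, j) b := by
  have hT : topDiff s t ≠ 0 := mt topDiff_eq_zero_iff.1 hst
  have hj := j.is_le
  by_cases hjT : j.val < topDiff s t
  · refine ⟨(s, 0), Or.inl rfl, (t, 0), Or.inl rfl, by simpa using hst, ?_, ?_⟩ <;>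
      simp only [dist_mk_zero, levelZeroDist, topDiff_self, topDiff_comm t s] <;> omega
  · obtain ⟨k, hk⟩ := Function.ne_iff.1 hst
    have hkj : k.val < j.val := (lt_topDiff hk).trans_le (not_lt.1 hjT)
    have hrev : r - j.val < topDiff (s ∘ Fin.rev) (t ∘ Fin.rev) := by
      have := lt_topDiff (w := s ∘ Fin.rev) (x := t ∘ Fin.rev) (k := k.rev) (by simpa using hk)
      rw [Fin.val_rev] at this
      omega
    refine ⟨(s, Fin.last r), Or.inr rfl, (t, Fin.last r), Or.inr rfl, by simpa using hst,
      ?_, ?_⟩ <;>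
      simp only [dist_mk_last, levelZeroDist, reverse, Fin.val_rev, topDiff_self,
        topDiff_comm (t ∘ Fin.rev)] <;> omega

theorem ftResSet_endLevels (r : ℕ) : FTResSet (BF r) (endLevels r) := by
  refine ftResSet_of_forall_exists_pair fun ⟨s, j⟩ ⟨t, l⟩ huv => ?_
  rcases lt_trichotomy j l with h | rfl | h
  · exact exists_pair_resolving_of_lt s t h
  · exact exists_pair_resolving_of_ne (fun hst => huv (by rw [hst])) j
  · obtain ⟨a, ha, b, hb, hab, hda, hdb⟩ := exists_pair_resolving_of_lt t s h
    exact ⟨a, ha, b, hb, hab, hda.symm, hdb.symm⟩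

/-- At an end level every edge changes the same bit `k`, so flipping `k` gives a twin. -/
theorem isTwinPair_update {j : Fin (r + 1)} {k : Fin r}
    (hk : ∀ i : Fin (r + 1), (j.val + 1 = i.val ∨ i.val + 1 = j.val) →
      max j.val i.val = k.val + 1)
    (s : Fin r → Bool) : IsTwinPair (BF r) (s, j) (Function.update s k (!s k), j) := by
  refine ⟨by simp, Or.inl ?_⟩
  ext ⟨y, i⟩
  simp only [mem_neighborSet, adj_iff]
  refine and_congr_right fun hl => forall_congr' fun k' => ?_
  rw [hk i hl]
  refine imp_congr_right fun hk' => ?_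
  rw [Function.update_of_ne (by rintro rfl; exact hk' rfl)]

theorem isTwin_of_mem_endLevels (hr : 0 < r) : ∀ v ∈ endLevels r, IsTwin (BF r) v := by
  rintro ⟨s, j⟩ (hj | hj)
  · exact ⟨_, isTwinPair_update (k := ⟨0, hr⟩)
      (fun _ _ => by simp only at hj ⊢; omega) s⟩
  · exact ⟨_, isTwinPair_update (k := ⟨r - 1, by omega⟩)
      (fun i hi => by have := i.isLt; simp only at hj ⊢; omega) s⟩

theorem ncard_endLevels (hr : 0 < r) : (endLevels r).ncard = 2 ^ (r + 1) := by
  have : endLevels r = Set.univ ×ˢ {0, Fin.last r} := by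
    ext ⟨x, i⟩
    simp only [endLevels, Set.mem_ofPred_eq, Set.mem_prod, Set.mem_univ, true_and,
      Set.mem_insert_iff, Set.mem_singleton_iff, Fin.ext_iff, Fin.val_zero, Fin.val_last]
  rw [this, Set.ncard_prod, Set.ncard_univ, Set.ncard_pair (by simp [Fin.ext_iff]; omega)]
  simp [pow_succ]

end BF

theorem bf_ftmd (r : ℕ) (hr : 3 ≤ r) :
    FTResSet (BF r) {v : (Fin r → Bool) × Fin (r + 1) | v.2.val = 0 ∨ v.2.val = r} ∧
    ftmd (BF r) = 2 ^ (r + 1) := by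
  have hX := BF.ftResSet_endLevels r
  refine ⟨hX, ?_⟩
  rw [ftmd_eq_ncard BF.preconnected hX (BF.isTwin_of_mem_endLevels (by omega)),
    BF.ncard_endLevels (by omega)]
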